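/- arXiv:1109.2161 — 2 statements merged into one kernel-verified Lean document; each statement's English description precedes it below -/
import Mathlib

section
/- For L = 1 there exists a family of homeomorphisms Θ_{n,0}, Θ_{n,1} ∈ COMFORT(Δ_n) (n ∈ ℕ₀) such that: (a) for every n ≥ 1, all i,k ∈ {0,1}, and all j,p ∈ {0,…,n} with j ≤ p, the equality EQUATION_{n,j≤p,i,k} holds; and (b) for every n ≥ 1, Θ_{n,0} maps the cross ♣_{n,1/(2(n+1))} homeomorphically onto ♣_{n,1/(2(n+2))}, and Θ_{n,1} maps ♣_{n,1/(2(n+1))} homeomorphically onto ♣_{n,1/(2(n+1)+1)}. -/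
open scoped BigOperators

noncomputable section

/-- `Spx k` is the standard simplex on `k` coordinates, i.e. the standard simplex
`Δ_{k-1}` of the paper, as a subspace of `ℝ^k`. -/
abbrev Spx (k : ℕ) : Type := {x : Fin k → ℝ // x ∈ stdSimplex ℝ (Fin k)}

lemma perm_mem {k : ℕ} (ϑ : Equiv.Perm (Fin k)) {x : Fin k → ℝ}
    (hx : x ∈ stdSimplex ℝ (Fin k)) :
    (fun i => x (ϑ i)) ∈ stdSimplex ℝ (Fin k) :=
  ⟨fun i => hx.1 (ϑ i), (Equiv.sum_comp ϑ x).trans hx.2⟩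

/-- membership of `COMFORT (Δ_n)`: a self-homeomorphism of the standard simplex which
(i) respects coordinate permutations and (ii) keeps the order. -/
structure IsComfort {n : ℕ} (F : Spx (n+1) ≃ₜ Spx (n+1)) : Prop where
  perm : ∀ (ϑ : Equiv.Perm (Fin (n+1))) (x : Spx (n+1)),
      ((F ⟨fun i => x.1 (ϑ i), perm_mem ϑ x.2⟩ : Spx (n+1)) : Fin (n+1) → ℝ)
        = fun i => (F x).1 (ϑ i)
  mono : ∀ (x : Spx (n+1)) (i j : Fin (n+1)), x.1 i ≤ x.1 j → (F x).1 i ≤ (F x).1 j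

/-- the `α`-cross `♣_{n,α}` of `Δ_n`. -/
def cross (n : ℕ) (α : ℝ) : Set (Spx (n+1)) := {x | ∃ j, x.1 j = α}

/-- the boundary `BOU_n = ♣_{n,0}` of `Δ_n`. -/
def bou (n : ℕ) : Set (Spx (n+1)) := cross n 0

/-- the barycenter `Center_n` of `Δ_n`. -/
def center (n : ℕ) : Spx (n+1) :=
  ⟨fun _ => 1/((n:ℝ)+1), by
    constructor
    · intro i
      positivity
    · rw [Finset.sum_const, Finset.card_univ, Fintype.card_fin, nsmul_eq_mul]
      push_cast
      field_simp⟩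

/-- the minimal coordinate of a point of `Δ_n`. -/
def minCoord {n : ℕ} (x : Spx (n+1)) : ℝ :=
  Finset.univ.inf' Finset.univ_nonempty x.1

/-- the `α`-layer `Layer_{n,α}` of `Δ_n`. -/
def layer (n : ℕ) (α : ℝ) : Set (Spx (n+1)) := {x | minCoord x = α}

/-- `Sponge (Δ_n)`: the points of `Δ_n` with pairwise distinct coordinates. -/
def sponge (n : ℕ) : Set (Spx (n+1)) := {x | ∀ i j, x.1 i = x.1 j → i = j}

/-- the value `v = i/((L+1)(n+1))` inserted by the face map `⟨·⟩_{L,n,i,j}`. -/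
def vval (L n : ℕ) (i : Fin (L+1)) : ℝ := (i : ℝ) / (((L:ℝ)+1) * ((n:ℝ)+1))

lemma vval_nonneg (L n : ℕ) (i : Fin (L+1)) : 0 ≤ vval L n i := by
  unfold vval; positivity

lemma vval_lt_one (L n : ℕ) (i : Fin (L+1)) : vval L n i < 1 := by
  unfold vval
  rw [div_lt_one (by positivity)]
  have h1 : (i : ℝ) < (L:ℝ)+1 := by exact_mod_cast i.isLt
  have h2 : ((L:ℝ)+1) ≤ ((L:ℝ)+1) * ((n:ℝ)+1) := by
    nlinarith [Nat.cast_nonneg (α := ℝ) L, Nat.cast_nonneg (α := ℝ) n]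
  linarith

/-- the underlying function of the face map `⟨id⟩_{L,n,i,j} : Δ_{n-1} → Δ_n`:
insert the value `v` at position `j` and rescale the remaining coordinates by `1 - v`. -/
def faceFun (L n : ℕ) (i : Fin (L+1)) (j : Fin (n+1)) (x : Fin n → ℝ) : Fin (n+1) → ℝ :=
  j.insertNth (vval L n i) (fun k => (1 - vval L n i) * x k)

lemma faceFun_mem (L n : ℕ) (i : Fin (L+1)) (j : Fin (n+1)) {x : Fin n → ℝ}
    (hx : x ∈ stdSimplex ℝ (Fin n)) :
    faceFun L n i j x ∈ stdSimplex ℝ (Fin (n+1)) := by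
  constructor
  · intro m
    rcases eq_or_ne m j with rfl | h
    · simpa [faceFun] using vval_nonneg L n i
    · obtain ⟨k, rfl⟩ := Fin.exists_succAbove_eq h
      simp only [faceFun, Fin.insertNth_apply_succAbove]
      exact mul_nonneg (by linarith [vval_lt_one L n i]) (hx.1 k)
  · rw [Fin.sum_univ_succAbove _ j]
    simp only [faceFun, Fin.insertNth_apply_same, Fin.insertNth_apply_succAbove]
    rw [← Finset.mul_sum, hx.2]
    ring

/-- the face map `⟨id⟩_{L,n,i,j} : Δ_{n-1} → Δ_n` as a continuous map. -/
def faceCM (L n : ℕ) (i : Fin (L+1)) (j : Fin (n+1)) : C(Spx n, Spx (n+1)) where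
  toFun x := ⟨faceFun L n i j x.1, faceFun_mem L n i j x.2⟩
  continuous_toFun := by
    refine Continuous.subtype_mk ?_ _
    refine continuous_pi fun m => ?_
    rcases eq_or_ne m j with rfl | h
    · simpa [faceFun] using (continuous_const : Continuous fun _ : Spx n => vval L n i)
    · obtain ⟨k, rfl⟩ := Fin.exists_succAbove_eq h
      simp only [faceFun, Fin.insertNth_apply_succAbove]
      exact continuous_const.mul ((continuous_apply k).comp continuous_subtype_val)

open Fin.NatCast in
/-- `EQUATION_{n,j≤p,i,k}` of the paper, where `n = n'+1 ≥ 1`: the equality of the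
two composite maps `Δ_{n-1} → Δ_{n+1}`, namely
`⟨id⟩_{L,n+1,i,j} ∘ Θ_{L,n,i} ∘ ⟨id⟩_{L,n,k,p} ∘ Θ_{L,n-1,k}
  = ⟨id⟩_{L,n+1,k,p+1} ∘ Θ_{L,n,k} ∘ ⟨id⟩_{L,n,i,j} ∘ Θ_{L,n-1,i}`. -/
def EquationHolds (L : ℕ)
    (Θ : ∀ n : ℕ, Fin (L+1) → (Spx (n+1) ≃ₜ Spx (n+1)))
    (n' : ℕ) (i k : Fin (L+1)) (j p : Fin (n'+2)) : Prop :=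
  ∀ x : Spx (n'+1),
    faceCM L (n'+2) i j.castSucc ((Θ (n'+1) i) (faceCM L (n'+1) k p ((Θ n' k) x))) =
    faceCM L (n'+2) k p.succ ((Θ (n'+1) k) (faceCM L (n'+1) i j.castSucc ((Θ n' i) x)))

/-!
`Θ_{n,i}` is a coordinatewise piecewise-linear squeeze: every coordinate is cut at the cross
level `α_n = 1/(2(n+1))`, the part below `α_n` is multiplied by a ratio `r_{n,i}` and the excess
above `α_n` by the one slope that keeps the coordinate sum equal to `1`. Being coordinatewise and
monotone it lies in `COMFORT(Δ_n)`, and it maps the `α_n`-cross onto the `r_{n,i} α_n`-cross.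

Such kink maps compose to kink maps, and a face map only multiplies both slopes by `1 - v`. The
ratios are chosen so that `(1 - v) r_{n,i}` does not depend on `i`; then both sides of
`EQUATION_{n,j≤p,i,k}` are the same kink map with the same coordinates inserted at the same
places, except possibly for the excess slope. Since the excess of a point of `Δ_n` above `α_n` is
at least `1/2`, that slope is determined by the coordinate sum, so the two sides agree. The same
uniqueness shows that the squeeze with level `r α` and ratio `r⁻¹` inverts the one with level `α`
and ratio `r`.
-/

lemma Fin.two_cast_le_one (i : Fin 2) : (i : ℝ) ≤ 1 := by
  exact_mod_cast Fin.is_le i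

lemma Fin.comp_insertNth {n : ℕ} {β γ : Type*} (f : β → γ) (p : Fin (n + 1)) (a : β)
    (w : Fin n → β) :
    (fun t => f (Fin.insertNth (α := fun _ => β) p a w t)) =
      Fin.insertNth (α := fun _ => γ) p (f a) fun t => f (w t) := by
  funext t
  induction t using p.succAboveCases <;> simp

lemma Fin.insertNth_castSucc_insertNth {n : ℕ} {β : Type*} {j p : Fin (n + 1)} (h : j ≤ p)
    (a b : β) (w : Fin n → β) :
    Fin.insertNth (α := fun _ => β) j.castSucc a (Fin.insertNth p b w) =
      Fin.insertNth (α := fun _ => β) p.succ b (Fin.insertNth j a w) := by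
  have hsucc (z : Fin n) :
      j.castSucc.succAbove (p.succAbove z) = p.succ.succAbove (j.succAbove z) := by
    have : (j : ℕ) ≤ p := h
    ext
    simp only [Fin.succAbove, Fin.lt_def, Fin.val_castSucc, apply_ite Fin.val, Fin.val_succ]
    split_ifs <;> omega
  funext t
  induction t using j.castSucc.succAboveCases with
  | x => rw [← Fin.succAbove_succ_of_le p j h]; simp
  | p u =>
    induction u using p.succAboveCases with
    | x => rw [Fin.insertNth_apply_succAbove, Fin.succAbove_castSucc_of_le j p h]; simp
    | p z => rw [Fin.insertNth_apply_succAbove, hsucc]; simp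

def kink (α c l u : ℝ) : ℝ := c * min u α + l * max (u - α) 0

section Kink

variable {α c l c' l' u : ℝ}

lemma kink_of_le (h : u ≤ α) : kink α c l u = c * u := by
  rw [kink, min_eq_left h, max_eq_right (by linarith), mul_zero, add_zero]

lemma kink_of_ge (h : α ≤ u) : kink α c l u = c * α + l * (u - α) := by
  rw [kink, min_eq_right h, max_eq_left (by linarith)]

lemma mul_kink (a : ℝ) : a * kink α c l u = kink α (a * c) (a * l) u := by
  unfold kink; ring

lemma kink_one_one : kink α 1 1 u = u := by
  rcases le_total u α with h | h
  · rw [kink_of_le h, one_mul]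
  · rw [kink_of_ge h]; ring

lemma kink_kink (hc : 0 ≤ c) (hl : 0 ≤ l) :
    kink (c * α) c' l' (kink α c l u) = kink α (c' * c) (l' * l) u := by
  rcases le_total u α with h | h
  · rw [kink_of_le h, kink_of_le (mul_le_mul_of_nonneg_left h hc), kink_of_le h, mul_assoc]
  · have hk : c * α ≤ kink α c l u := by
      rw [kink_of_ge h]; nlinarith [mul_nonneg hl (sub_nonneg.2 h)]
    rw [kink_of_ge hk, kink_of_ge h, kink_of_ge h]; ring

lemma kink_nonneg (hα : 0 ≤ α) (hc : 0 ≤ c) (hl : 0 ≤ l) (hu : 0 ≤ u) : 0 ≤ kink α c l u :=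
  add_nonneg (mul_nonneg hc (le_min hu hα)) (mul_nonneg hl (le_max_right _ _))

lemma kink_monotone (hc : 0 ≤ c) (hl : 0 ≤ l) : Monotone (kink α c l) := fun _ _ h =>
  add_le_add (mul_le_mul_of_nonneg_left (min_le_min_right α h) hc)
    (mul_le_mul_of_nonneg_left (max_le_max_right 0 (sub_le_sub_right h α)) hl)

end Kink

def excess {N : ℕ} (α : ℝ) (x : Fin N → ℝ) : ℝ := ∑ t, max (x t - α) 0

section Excess

variable {N : ℕ} {α c l l' : ℝ} {x : Fin N → ℝ}

lemma sum_kink (hx : x ∈ stdSimplex ℝ (Fin N)) :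
    ∑ t, kink α c l (x t) = c * (1 - excess α x) + l * excess α x := by
  have hmin (u : ℝ) : min u α = u - max (u - α) 0 := by
    rcases le_total u α with h | h
    · rw [min_eq_left h, max_eq_right (by linarith), sub_zero]
    · rw [min_eq_right h, max_eq_left (by linarith)]; ring
  simp only [kink, hmin, Finset.sum_add_distrib, ← Finset.mul_sum, Finset.sum_sub_distrib, hx.2,
    excess]

lemma one_sub_card_mul_le_excess (hx : x ∈ stdSimplex ℝ (Fin N)) :
    1 - N * α ≤ excess α x := by
  calc 1 - N * α = ∑ t, (x t - α) := by simp [Finset.sum_sub_distrib, hx.2]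
    _ ≤ excess α x := Finset.sum_le_sum fun t _ => le_max_left _ _

lemma excess_pos (hx : x ∈ stdSimplex ℝ (Fin N)) (h : N * α < 1) : 0 < excess α x := by
  linarith [one_sub_card_mul_le_excess (α := α) hx]

lemma eq_of_sum_kink_eq (hx : x ∈ stdSimplex ℝ (Fin N)) (h : N * α < 1)
    (hsum : ∑ t, kink α c l (x t) = ∑ t, kink α c l' (x t)) : l = l' := by
  rw [sum_kink hx, sum_kink hx] at hsum
  exact mul_right_cancel₀ (excess_pos hx h).ne' (by linarith)

end Excess

/-- The solution `l` of `r * (1 - excess α x) + l * excess α x = 1`, so that `squeeze α r x` has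
coordinate sum `1`. -/
def squeezeSlope {N : ℕ} (α r : ℝ) (x : Fin N → ℝ) : ℝ := r + (1 - r) / excess α x

def squeeze {N : ℕ} (α r : ℝ) (x : Fin N → ℝ) (t : Fin N) : ℝ :=
  kink α r (squeezeSlope α r x) (x t)

section Squeeze

variable {N : ℕ} {α r : ℝ} {x : Fin N → ℝ}

lemma squeezeSlope_mul_excess (hx : x ∈ stdSimplex ℝ (Fin N)) (h : N * α < 1) :
    squeezeSlope α r x * excess α x = 1 - r * (1 - excess α x) := by
  have := (excess_pos hx h).ne'
  unfold squeezeSlope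
  field_simp
  ring

lemma squeezeSlope_pos (hx : x ∈ stdSimplex ℝ (Fin N)) (hr : 0 ≤ r) (h : N * α < 1)
    (hr' : N * (r * α) < 1) : 0 < squeezeSlope α r x := by
  have hM := excess_pos hx h
  have hlow := one_sub_card_mul_le_excess (α := α) hx
  have hprod := squeezeSlope_mul_excess (r := r) hx h
  refine pos_of_mul_pos_left (a := squeezeSlope α r x) ?_ hM.le
  rw [hprod]
  nlinarith [mul_le_mul_of_nonneg_left (sub_le_comm.1 hlow) hr]

lemma squeeze_mem (hx : x ∈ stdSimplex ℝ (Fin N)) (hα : 0 ≤ α) (hr : 0 < r) (h : N * α < 1)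
    (hr' : N * (r * α) < 1) : squeeze α r x ∈ stdSimplex ℝ (Fin N) := by
  refine ⟨fun t => kink_nonneg hα hr.le (squeezeSlope_pos hx hr.le h hr').le (hx.1 t), ?_⟩
  simp only [squeeze]
  rw [sum_kink hx, squeezeSlope_mul_excess hx h]
  ring

lemma squeeze_squeeze (hx : x ∈ stdSimplex ℝ (Fin N)) (hα : 0 ≤ α) (hr : 0 < r)
    (h : N * α < 1) (hr' : N * (r * α) < 1) : squeeze (r * α) r⁻¹ (squeeze α r x) = x := by
  set l := squeezeSlope (r * α) r⁻¹ (squeeze α r x) * squeezeSlope α r x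
  have hcomp : squeeze (r * α) r⁻¹ (squeeze α r x) = fun t => kink α 1 l (x t) := by
    funext t
    change kink (r * α) r⁻¹ _ (kink α r (squeezeSlope α r x) (x t)) = _
    rw [kink_kink hr.le (squeezeSlope_pos hx hr.le h hr').le, inv_mul_cancel₀ hr.ne']
  have hmem := squeeze_mem (squeeze_mem hx hα hr h hr') (mul_nonneg hr.le hα) (inv_pos.2 hr) hr'
    (by rwa [inv_mul_cancel_left₀ hr.ne'])
  have hl : l = 1 := by
    refine eq_of_sum_kink_eq (c := 1) hx h ?_
    simp only [kink_one_one, hx.2, ← hcomp, hmem.2]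
  rw [hcomp, hl]
  exact funext fun t => kink_one_one

lemma squeeze_perm (ϑ : Equiv.Perm (Fin N)) :
    squeeze α r (fun t => x (ϑ t)) = fun t => squeeze α r x (ϑ t) := by
  have : excess α (fun t => x (ϑ t)) = excess α x :=
    Equiv.sum_comp ϑ (fun u => max (x u - α) 0)
  funext t
  rw [squeeze, squeeze, squeezeSlope, squeezeSlope, this]

lemma continuous_squeeze (h : N * α < 1) : Continuous fun x : Spx N => squeeze α r x.1 := by
  have hcoord (t : Fin N) : Continuous fun x : Spx N => x.1 t :=
    (continuous_apply t).comp continuous_subtype_val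
  have hexcess : Continuous fun x : Spx N => excess α x.1 :=
    continuous_finsetSum _ fun t _ => ((hcoord t).sub continuous_const).max continuous_const
  have hslope : Continuous fun x : Spx N => squeezeSlope α r x.1 :=
    continuous_const.add (continuous_const.div hexcess fun x => (excess_pos x.2 h).ne')
  exact continuous_pi fun t => (continuous_const.mul ((hcoord t).min continuous_const)).add
    (hslope.mul (((hcoord t).sub continuous_const).max continuous_const))

end Squeeze

def squeezeHomeo (N : ℕ) (α r : ℝ) (hα : 0 ≤ α) (hr : 0 < r) (h : N * α < 1)
    (hr' : N * (r * α) < 1) : Spx N ≃ₜ Spx N :=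
  have hα' : 0 ≤ r * α := mul_nonneg hr.le hα
  have h' : N * (r⁻¹ * (r * α)) < 1 := by rwa [inv_mul_cancel_left₀ hr.ne']
  { toFun x := ⟨squeeze α r x.1, squeeze_mem x.2 hα hr h hr'⟩
    invFun y := ⟨squeeze (r * α) r⁻¹ y.1, squeeze_mem y.2 hα' (inv_pos.2 hr) hr' h'⟩
    left_inv x := Subtype.ext (squeeze_squeeze x.2 hα hr h hr')
    right_inv y := Subtype.ext <| by
      simpa only [inv_mul_cancel_left₀ hr.ne', inv_inv] using
        squeeze_squeeze y.2 hα' (inv_pos.2 hr) hr' h'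
    continuous_toFun := (continuous_squeeze h).subtype_mk _
    continuous_invFun := (continuous_squeeze hr').subtype_mk _ }

section SqueezeHomeo

variable {α r : ℝ} {hα : 0 ≤ α} {hr : 0 < r}

@[simp] lemma squeezeHomeo_apply {N : ℕ} {h : N * α < 1} {hr' : N * (r * α) < 1} (x : Spx N) :
    (squeezeHomeo N α r hα hr h hr' x).1 = squeeze α r x.1 := rfl

@[simp] lemma squeezeHomeo_symm_apply {N : ℕ} {h : N * α < 1} {hr' : N * (r * α) < 1}
    (y : Spx N) :
    ((squeezeHomeo N α r hα hr h hr').symm y).1 = squeeze (r * α) r⁻¹ y.1 := rfl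

lemma isComfort_squeezeHomeo {n : ℕ} {h : ((n + 1 : ℕ) : ℝ) * α < 1}
    {hr' : ((n + 1 : ℕ) : ℝ) * (r * α) < 1} : IsComfort (squeezeHomeo (n + 1) α r hα hr h hr') where
  perm ϑ _ := squeeze_perm ϑ
  mono x _ _ hij := kink_monotone hr.le (squeezeSlope_pos x.2 hr.le h hr').le hij

lemma image_squeezeHomeo_cross {n : ℕ} {h : ((n + 1 : ℕ) : ℝ) * α < 1}
    {hr' : ((n + 1 : ℕ) : ℝ) * (r * α) < 1} :
    squeezeHomeo (n + 1) α r hα hr h hr' '' cross n α = cross n (r * α) := by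
  refine Set.Subset.antisymm ?_ fun y ⟨j, hj⟩ => ⟨_, ⟨j, ?_⟩, Homeomorph.apply_symm_apply _ y⟩
  · rintro _ ⟨x, ⟨j, hj⟩, rfl⟩
    exact ⟨j, by rw [squeezeHomeo_apply, squeeze, kink_of_le hj.le, hj]⟩
  · rw [squeezeHomeo_symm_apply, squeeze, kink_of_le hj.le, hj, inv_mul_cancel_left₀ hr.ne']

end SqueezeHomeo

def crossLevel (n : ℕ) : ℝ := 1 / (2 * ((n : ℝ) + 1))

/-- Chosen so that `squeezeRatio n i * crossLevel n = 1 / (2 * n + 4 - i)` while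
`(1 - vval 1 (n + 1) i) * squeezeRatio n i = lowSlope n` does not depend on `i`. -/
def squeezeRatio (n : ℕ) (i : Fin 2) : ℝ := (2 * (n : ℝ) + 2) / (2 * (n : ℝ) + 4 - (i : ℝ))

def lowSlope (n : ℕ) : ℝ := ((n : ℝ) + 1) / ((n : ℝ) + 2)

lemma squeezeRatio_denom_pos (n : ℕ) (i : Fin 2) : 0 < 2 * (n : ℝ) + 4 - (i : ℝ) := by
  linarith [Fin.two_cast_le_one i, (Nat.cast_nonneg n : (0 : ℝ) ≤ n)]

lemma crossLevel_nonneg (n : ℕ) : 0 ≤ crossLevel n := by unfold crossLevel; positivity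

lemma lowSlope_nonneg (n : ℕ) : 0 ≤ lowSlope n := by unfold lowSlope; positivity

lemma squeezeRatio_pos (n : ℕ) (i : Fin 2) : 0 < squeezeRatio n i :=
  div_pos (by positivity) (squeezeRatio_denom_pos n i)

lemma squeezeRatio_mul_crossLevel (n : ℕ) (i : Fin 2) :
    squeezeRatio n i * crossLevel n = 1 / (2 * (n : ℝ) + 4 - (i : ℝ)) := by
  have := (squeezeRatio_denom_pos n i).ne'
  unfold squeezeRatio crossLevel
  field_simp

lemma card_mul_crossLevel_lt (n : ℕ) : ((n + 1 : ℕ) : ℝ) * crossLevel n < 1 := by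
  simp only [crossLevel]; push_cast; field_simp; linarith

lemma card_mul_squeezeRatio_mul_crossLevel_lt (n : ℕ) (i : Fin 2) :
    ((n + 1 : ℕ) : ℝ) * (squeezeRatio n i * crossLevel n) < 1 := by
  rw [squeezeRatio_mul_crossLevel, mul_one_div, div_lt_one (squeezeRatio_denom_pos n i)]
  push_cast
  linarith [Fin.two_cast_le_one i]

lemma one_sub_vval_mul_squeezeRatio (n : ℕ) (i : Fin 2) :
    (1 - vval 1 (n + 1) i) * squeezeRatio n i = lowSlope n := by
  have := (squeezeRatio_denom_pos n i).ne'
  simp only [vval, squeezeRatio, lowSlope]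
  push_cast
  rw [show (1 : ℝ) - i / ((1 + 1) * (n + 1 + 1)) = (2 * n + 4 - i) / (2 * (n + 2)) by
    field_simp; ring]
  field_simp

lemma lowSlope_mul_crossLevel (n : ℕ) : lowSlope n * crossLevel n = crossLevel (n + 1) := by
  simp only [lowSlope, crossLevel]; push_cast; field_simp; ring

lemma lowSlope_mul_vval (n : ℕ) (i : Fin 2) :
    lowSlope (n + 1) * vval 1 (n + 1) i = vval 1 (n + 2) i := by
  simp only [lowSlope, vval]; push_cast; field_simp; ring

lemma vval_le_crossLevel (n : ℕ) (i : Fin 2) : vval 1 (n + 1) i ≤ crossLevel (n + 1) := by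
  simp only [vval, crossLevel]
  push_cast
  rw [div_le_div_iff₀ (by positivity) (by positivity)]
  nlinarith [Fin.two_cast_le_one i, (Nat.cast_nonneg n : (0 : ℝ) ≤ n)]

def theta (n : ℕ) (i : Fin 2) : Spx (n + 1) ≃ₜ Spx (n + 1) :=
  squeezeHomeo (n + 1) (crossLevel n) (squeezeRatio n i) (crossLevel_nonneg n)
    (squeezeRatio_pos n i) (card_mul_crossLevel_lt n) (card_mul_squeezeRatio_mul_crossLevel_lt n i)

lemma faceCM_theta (n : ℕ) (i : Fin 2) (j : Fin (n + 2)) (x : Spx (n + 1)) :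
    ∃ l ≥ 0, (faceCM 1 (n + 1) i j (theta n i x)).1 =
      Fin.insertNth (α := fun _ => ℝ) j (vval 1 (n + 1) i)
        fun t => kink (crossLevel n) (lowSlope n) l (x.1 t) := by
  refine ⟨(1 - vval 1 (n + 1) i) * squeezeSlope (crossLevel n) (squeezeRatio n i) x.1,
    mul_nonneg (by linarith [vval_lt_one 1 (n + 1) i])
      (squeezeSlope_pos x.2 (squeezeRatio_pos n i).le (card_mul_crossLevel_lt n)
        (card_mul_squeezeRatio_mul_crossLevel_lt n i)).le, ?_⟩
  change Fin.insertNth (α := fun _ => ℝ) j _ (fun t => _ * squeeze _ _ x.1 t) = _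
  simp only [squeeze, mul_kink, one_sub_vval_mul_squeezeRatio]

lemma faceCM_theta_faceCM_theta (n : ℕ) (i k : Fin 2) (j : Fin (n + 3)) (p : Fin (n + 2))
    (x : Spx (n + 1)) :
    ∃ l, (faceCM 1 (n + 2) i j (theta (n + 1) i (faceCM 1 (n + 1) k p (theta n k x)))).1 =
      Fin.insertNth (α := fun _ => ℝ) j (vval 1 (n + 2) i)
        (Fin.insertNth p (vval 1 (n + 2) k)
          fun t => kink (crossLevel n) (lowSlope (n + 1) * lowSlope n) l (x.1 t)) := by
  obtain ⟨l, hl, hy⟩ := faceCM_theta n k p x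
  obtain ⟨l', -, hz⟩ := faceCM_theta (n + 1) i j (faceCM 1 (n + 1) k p (theta n k x))
  refine ⟨l' * l, ?_⟩
  rw [hz, hy, Fin.comp_insertNth, kink_of_le (vval_le_crossLevel n k), lowSlope_mul_vval,
    ← lowSlope_mul_crossLevel]
  simp only [kink_kink (lowSlope_nonneg n) hl]

open Fin.NatCast in
lemma equationHolds_theta (n : ℕ) (i k : Fin 2) (j p : Fin (n + 2)) (hjp : j ≤ p) :
    EquationHolds 1 theta n i k j p := by
  intro x
  -- `EquationHolds` reads the inner face index `j.castSucc` back in `Fin (n + 2)`, where it is `j`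
  rw [Fin.val_castSucc, Fin.cast_val_eq_self]
  obtain ⟨l, hl⟩ := faceCM_theta_faceCM_theta n i k j.castSucc p x
  obtain ⟨l', hl'⟩ := faceCM_theta_faceCM_theta n k i p.succ j x
  rw [← Fin.insertNth_castSucc_insertNth hjp] at hl'
  have hsum (y : Spx (n + 3)) (l : ℝ) (hy : y.1 = Fin.insertNth (α := fun _ => ℝ) j.castSucc
      (vval 1 (n + 2) i) (Fin.insertNth p (vval 1 (n + 2) k)
        fun t => kink (crossLevel n) (lowSlope (n + 1) * lowSlope n) l (x.1 t))) :
      ∑ t, kink (crossLevel n) (lowSlope (n + 1) * lowSlope n) l (x.1 t) =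
        1 - vval 1 (n + 2) i - vval 1 (n + 2) k := by
    have := y.2.2
    rw [hy, Fin.sum_insertNth, Fin.sum_insertNth] at this
    linarith
  have hll' : l = l' := eq_of_sum_kink_eq x.2 (card_mul_crossLevel_lt n) <| by
    rw [hsum _ l hl, hsum _ l' hl']
  exact Subtype.ext (by rw [hl, hl', hll'])

theorem exists_comfort_theta_family :
    ∃ Θ : ∀ n : ℕ, Fin (1+1) → (Spx (n+1) ≃ₜ Spx (n+1)),
      (∀ (n : ℕ) (i : Fin (1+1)), IsComfort (Θ n i)) ∧
      (∀ (n' : ℕ) (i k : Fin (1+1)) (j p : Fin (n'+2)), j ≤ p →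
        EquationHolds 1 Θ n' i k j p) ∧
      (∀ n : ℕ, 1 ≤ n →
        (⇑(Θ n 0) '' cross n (1/(2*((n:ℝ)+1))) = cross n (1/(2*((n:ℝ)+2))) ∧
         ⇑(Θ n 1) '' cross n (1/(2*((n:ℝ)+1))) = cross n (1/(2*((n:ℝ)+1)+1)))) := by
  refine ⟨theta, fun n i => isComfort_squeezeHomeo, equationHolds_theta, fun n _ => ?_⟩
  have himage (i : Fin 2) :
      theta n i '' cross n (crossLevel n) = cross n (1 / (2 * (n : ℝ) + 4 - (i : ℝ))) := by
    rw [← squeezeRatio_mul_crossLevel]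
    exact image_squeezeHomeo_cross
  constructor
  · rw [show 2 * ((n : ℝ) + 2) = 2 * n + 4 - ((0 : Fin 2) : ℕ) by simp; ring]
    exact himage 0
  · rw [show 2 * ((n : ℝ) + 1) + 1 = 2 * n + 4 - ((1 : Fin 2) : ℕ) by simp; ring]
    exact himage 1

end
end

section
/- Fix L ∈ ℕ₀, a tuple m = (m_0,…,m_L) ∈ ℤ^{L+1}, any family of homeomorphisms Θ_{L,n,i} : Δ_n → Δ_n (n ∈ ℕ₀, i ∈ {0,…,L}), and let {p} be a one-point topological space; set σ := Σ_{i=0}^{L} m_i. Then for every n, F(ℤ)_n(p) ≅ ℤ (generated by the unique continuous map Δ_n → {p}), the boundary operator ∂_n is zero if n is odd or n = 0 and equals multiplication by σ if n is even and n ≥ 2, so ∂_n ∘ ∂_{n+1} = 0 for all n, and the homology groups H_n(p) := ker(∂_n)/im(∂_{n+1}) satisfy: H_0(p) ≅ ℤ; if σ ≠ 0, then H_n(p) ≅ ℤ/σℤ for n odd and H_n(p) = 0 for n even with n ≥ 2; if σ = 0, then H_n(p) ≅ ℤ for all n ∈ ℕ₀. -/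
open scoped BigOperators

noncomputable section

variable (R : Type) [CommRing R] (X : Type) [TopologicalSpace X]

/-- `Chains R X k` is the module `F(R)_{k-1}(X)` of the paper; in particular
`Chains R X 0 = F(R)_{-1}(X)` is the zero module, and `Chains R X (n+1) = F(R)_n(X)`
is the free `R`-module on the set of continuous maps `Δ_n → X`. -/
def Chains : ℕ → Type
  | 0 => PUnit
  | (n+1) => C(Spx (n+1), X) →₀ R

instance : ∀ k, AddCommGroup (Chains R X k)
  | 0 => inferInstanceAs (AddCommGroup PUnit)
  | (n+1) => inferInstanceAs (AddCommGroup (C(Spx (n+1), X) →₀ R))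

instance (priority := 10000) : ∀ k, Module R (Chains R X k)
  | 0 => inferInstanceAs (Module R PUnit)
  | (n+1) => inferInstanceAs (Module R (C(Spx (n+1), X) →₀ R))

variable {X}

/-- the continuous map `⟨T⟩_{L,n+1,i,j} ∘ Θ_{L,n,i} : Δ_n → X`, for `T : Δ_{n+1} → X`. -/
def chainFace (L : ℕ) (Θ : ∀ n : ℕ, Fin (L+1) → (Spx (n+1) ≃ₜ Spx (n+1))) (n : ℕ)
    (T : C(Spx (n+2), X)) (i : Fin (L+1)) (j : Fin (n+2)) : C(Spx (n+1), X) :=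
  (T.comp (faceCM L (n+1) i j)).comp (Θ n i : C(Spx (n+1), Spx (n+1)))

variable (X)

/-- the boundary operator `∂_{n+1} : F(R)_{n+1}(X) → F(R)_n(X)` of the paper:
`∂(T) = Σ_j (-1)^j Σ_i m_i • [⟨T⟩_{L,n+1,i,j} ∘ Θ_{L,n,i}]` on basis elements. -/
def bddry (L : ℕ) (m : Fin (L+1) → R)
    (Θ : ∀ n : ℕ, Fin (L+1) → (Spx (n+1) ≃ₜ Spx (n+1))) (n : ℕ) :
    (C(Spx (n+2), X) →₀ R) →ₗ[R] (C(Spx (n+1), X) →₀ R) :=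
  Finsupp.lift _ R _ (fun T => ∑ j : Fin (n+2), ∑ i : Fin (L+1),
    ((-1 : R)^(j : ℕ) * m i) • Finsupp.single (chainFace L Θ n T i j) (1 : R))

/-- the full family of boundary operators `∂_k : F(R)_k(X) → F(R)_{k-1}(X)`
of the paper, with `∂_0 = 0`. -/
def paperBoundary (L : ℕ) (m : Fin (L+1) → R)
    (Θ : ∀ n : ℕ, Fin (L+1) → (Spx (n+1) ≃ₜ Spx (n+1))) :
    ∀ k, Chains R X (k+1) →ₗ[R] Chains R X k
  | 0 => 0
  | (n+1) => bddry R X L m Θ n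

/-- the unique continuous map from a simplex to the one-point space. -/
def pointMap (k : ℕ) : C(Spx k, PUnit.{1}) := ContinuousMap.const _ PUnit.unit

/-- the homology module `H_n (pt) = ker ∂_n / im ∂_{n+1}` of the one-point space. -/
abbrev homologyPt (L : ℕ) (m : Fin (L+1) → ℤ)
    (Θ : ∀ n : ℕ, Fin (L+1) → (Spx (n+1) ≃ₜ Spx (n+1))) (n : ℕ) :=
  LinearMap.ker (paperBoundary ℤ PUnit L m Θ n) ⧸
    (LinearMap.range (paperBoundary ℤ PUnit L m Θ (n+1))).comap
      (LinearMap.ker (paperBoundary ℤ PUnit L m Θ n)).subtype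

/-!
Each chain module of a point is free of rank one on the unique singular simplex, and all faces of
that simplex coincide. So `∂_k` is multiplication by `(∑_{j ≤ k} (-1)^j) * ∑_i m_i`, i.e. by `0`
for `k` odd and by `σ` for `k` even, and the homology is read off from the complex
`… →σ ℤ →0 ℤ →σ ℤ →0 ℤ → 0`.
-/

section QuotKer

variable {S : Type*} [CommRing S] {M₀ M₁ M₂ : Type*}
  [AddCommGroup M₀] [AddCommGroup M₁] [AddCommGroup M₂]
  [Module S M₀] [Module S M₁] [Module S M₂]

def quotKerEquivCokernelOfEqZero {f : M₁ →ₗ[S] M₀} (hf : f = 0) (g : M₂ →ₗ[S] M₁) :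
    (LinearMap.ker f ⧸ (LinearMap.range g).comap (LinearMap.ker f).subtype) ≃ₗ[S]
      M₁ ⧸ LinearMap.range g :=
  Submodule.Quotient.equiv _ _ (LinearEquiv.ofTop _ (by simp [hf])) <| by
    ext x
    simp [hf]

def quotKerEquivOfEqZero {f : M₁ →ₗ[S] M₀} (hf : f = 0) {g : M₂ →ₗ[S] M₁} (hg : g = 0) :
    (LinearMap.ker f ⧸ (LinearMap.range g).comap (LinearMap.ker f).subtype) ≃ₗ[S] M₁ :=
  (quotKerEquivCokernelOfEqZero hf g).trans (Submodule.quotEquivOfEqBot _ (by simp [hg]))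

theorem map_range_eq_span_of_apply_eq_mul (e₁ : M₁ ≃ₗ[S] S) (e₂ : M₂ ≃ₗ[S] S)
    {g : M₂ →ₗ[S] M₁} {c : S} (hg : ∀ u, e₁ (g u) = c * e₂ u) :
    (LinearMap.range g).map (e₁ : M₁ →ₗ[S] S) = Submodule.span S {c} := by
  have : (e₁ : M₁ →ₗ[S] S) ∘ₗ g = LinearMap.toSpanSingleton S S c ∘ₗ (e₂ : M₂ →ₗ[S] S) := by
    ext u
    simp [hg, mul_comm]
  rw [← LinearMap.range_comp, this, LinearMap.range_comp_of_range_eq_top _ e₂.range,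
    LinearMap.range_toSpanSingleton]

def cokernelEquivQuotientSpan (e₁ : M₁ ≃ₗ[S] S) (e₂ : M₂ ≃ₗ[S] S)
    {g : M₂ →ₗ[S] M₁} {c : S} (hg : ∀ u, e₁ (g u) = c * e₂ u) :
    (M₁ ⧸ LinearMap.range g) ≃ₗ[S] S ⧸ Submodule.span S {c} :=
  Submodule.Quotient.equiv _ _ e₁ (map_range_eq_span_of_apply_eq_mul e₁ e₂ hg)

theorem ker_eq_bot_of_apply_eq_mul [NoZeroDivisors S] (e₀ : M₀ ≃ₗ[S] S) (e₁ : M₁ ≃ₗ[S] S)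
    {f : M₁ →ₗ[S] M₀} {c : S} (hc : c ≠ 0) (hf : ∀ u, e₀ (f u) = c * e₁ u) :
    LinearMap.ker f = ⊥ := by
  refine LinearMap.ker_eq_bot'.mpr fun u hu => e₁.map_eq_zero_iff.mp ?_
  simpa [hu, hc] using hf u

theorem subsingleton_quotKer_of_ker_eq_bot {f : M₁ →ₗ[S] M₀} (hf : LinearMap.ker f = ⊥)
    (p : Submodule S (LinearMap.ker f)) : Subsingleton (LinearMap.ker f ⧸ p) := by
  have : Subsingleton (LinearMap.ker f) := Submodule.subsingleton_iff_eq_bot.mpr hf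
  exact (Submodule.Quotient.mk_surjective _).subsingleton

end QuotKer

section Point

variable (L : ℕ) (m : Fin (L+1) → R) (Θ : ∀ n : ℕ, Fin (L+1) → (Spx (n+1) ≃ₜ Spx (n+1)))

def pointChainsEquiv (k : ℕ) : Chains R PUnit (k+1) ≃ₗ[R] R :=
  Finsupp.uniqueLinearEquiv R R (pointMap (k+1))

variable {R} in
theorem pointChainsEquiv_single (k : ℕ) (T : C(Spx (k+1), PUnit.{1})) (a : R) :
    pointChainsEquiv R k (Finsupp.single T a) = a := by
  rw [Subsingleton.elim T (pointMap (k+1))]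
  exact Finsupp.single_eq_same

theorem pointChainsEquiv_paperBoundary (n : ℕ) (u : Chains R PUnit (n+2)) :
    pointChainsEquiv R n (paperBoundary R PUnit L m Θ (n+1) u) =
      (if Even n then 0 else ∑ i, m i) * pointChainsEquiv R (n+1) u := by
  -- stated on the underlying `Finsupp` types, to which `Chains R PUnit (k+1)` is only defeq
  have key : (Finsupp.uniqueLinearEquiv R R (pointMap (n+1)) : _ →ₗ[R] R) ∘ₗ
      bddry R PUnit L m Θ n = (if Even n then 0 else ∑ i, m i) •
        (Finsupp.uniqueLinearEquiv R R (pointMap (n+2)) : _ →ₗ[R] R) := by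
    refine Finsupp.lhom_ext fun T a => ?_
    obtain rfl : T = pointMap (n+2) := Subsingleton.elim _ _
    have hface : ∀ i j, chainFace L Θ n (pointMap (n+2)) i j = pointMap (n+1) :=
      fun _ _ => Subsingleton.elim _ _
    rw [LinearMap.comp_apply, bddry, Finsupp.lift_apply, Finsupp.sum_single_index (by simp)]
    simp only [hface, Finsupp.smul_single, ← Finsupp.single_finsetSum, LinearMap.smul_apply,
      LinearEquiv.coe_coe, Finsupp.uniqueLinearEquiv_apply, Finsupp.single_eq_same, smul_eq_mul,
      mul_one, ← Finset.sum_mul_sum, Fin.sum_neg_one_pow]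
    by_cases hn : Even n <;> simp [hn, parity_simps, mul_comm]
  exact LinearMap.congr_fun key u

theorem paperBoundary_point_succ_eq_zero (n : ℕ) (h : Even n ∨ ∑ i, m i = 0) :
    paperBoundary R PUnit L m Θ (n+1) = 0 :=
  LinearMap.ext fun u => (pointChainsEquiv R n).injective <| by
    rw [pointChainsEquiv_paperBoundary, LinearMap.zero_apply, map_zero]
    rcases h with h | h <;> simp [h]

theorem paperBoundary_point_eq_zero (n : ℕ) (h : Odd n ∨ n = 0) :
    paperBoundary R PUnit L m Θ n = 0 := by
  rcases h with ⟨k, rfl⟩ | rfl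
  · exact paperBoundary_point_succ_eq_zero R L m Θ (2 * k) (Or.inl (even_two_mul k))
  · rfl

end Point

theorem homology_of_point (L : ℕ) (m : Fin (L+1) → ℤ)
    (Θ : ∀ n : ℕ, Fin (L+1) → (Spx (n+1) ≃ₜ Spx (n+1)))
    (σ : ℤ) (hσ : σ = ∑ i : Fin (L+1), m i) :
    (∀ n : ℕ, ∃ e : Chains ℤ PUnit (n+1) ≃ₗ[ℤ] ℤ,
        e (Finsupp.single (pointMap (n+1)) 1) = 1) ∧
    (∀ n : ℕ, (Odd n ∨ n = 0) → paperBoundary ℤ PUnit L m Θ n = 0) ∧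
    (∀ k : ℕ, Even (k+1) → ∀ T : C(Spx (k+2), PUnit.{1}),
        paperBoundary ℤ PUnit L m Θ (k+1) (Finsupp.single T 1)
          = Finsupp.single (pointMap (k+1)) σ) ∧
    (∀ (n : ℕ) (u : Chains ℤ PUnit (n+2)),
        paperBoundary ℤ PUnit L m Θ n (paperBoundary ℤ PUnit L m Θ (n+1) u) = 0) ∧
    Nonempty (homologyPt L m Θ 0 ≃ₗ[ℤ] ℤ) ∧
    (σ ≠ 0 → ∀ n : ℕ, Odd n →
        Nonempty (homologyPt L m Θ n ≃ₗ[ℤ] ℤ ⧸ Submodule.span ℤ ({σ} : Set ℤ))) ∧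
    (σ ≠ 0 → ∀ n : ℕ, Even n → n ≠ 0 → Subsingleton (homologyPt L m Θ n)) ∧
    (σ = 0 → ∀ n : ℕ, Nonempty (homologyPt L m Θ n ≃ₗ[ℤ] ℤ)) := by
  have hzero := paperBoundary_point_eq_zero ℤ L m Θ
  have hmul : ∀ n u, pointChainsEquiv ℤ n (paperBoundary ℤ PUnit L m Θ (n+1) u) =
      (if Even n then 0 else σ) * pointChainsEquiv ℤ (n+1) u :=
    hσ ▸ pointChainsEquiv_paperBoundary ℤ L m Θ
  refine ⟨fun n => ⟨pointChainsEquiv ℤ n, pointChainsEquiv_single n _ 1⟩, hzero,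
    ?_, ?_, ?_, ?_, ?_, ?_⟩
  · intro k hk T
    apply (pointChainsEquiv ℤ k).injective
    refine (hmul k _).trans ?_
    rw [if_neg (Nat.even_add_one.mp hk), pointChainsEquiv_single, pointChainsEquiv_single, mul_one]
  · intro n u
    rcases Nat.even_or_odd n with h | h
    · rw [paperBoundary_point_succ_eq_zero ℤ L m Θ n (Or.inl h)]
      simp
    · rw [hzero n (Or.inl h)]
      rfl
  · exact ⟨(quotKerEquivOfEqZero (hzero 0 (Or.inr rfl)) (hzero 1 (Or.inl odd_one))).trans
      (pointChainsEquiv ℤ 0)⟩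
  · intro _ n hn
    exact ⟨(quotKerEquivCokernelOfEqZero (hzero n (Or.inl hn)) _).trans
      (cokernelEquivQuotientSpan (pointChainsEquiv ℤ n) (pointChainsEquiv ℤ (n+1))
        fun u => by rw [hmul, if_neg (Nat.not_even_iff_odd.mpr hn)])⟩
  · intro hσ0 n hn hn0
    obtain ⟨k, rfl⟩ := Nat.exists_eq_succ_of_ne_zero hn0
    exact subsingleton_quotKer_of_ker_eq_bot (ker_eq_bot_of_apply_eq_mul
      (pointChainsEquiv ℤ k) (pointChainsEquiv ℤ (k+1)) hσ0
      fun u => by rw [hmul, if_neg (Nat.even_add_one.mp hn)]) _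
  · intro h0 n
    have hall : ∀ k, paperBoundary ℤ PUnit L m Θ k = 0
      | 0 => rfl
      | k + 1 => paperBoundary_point_succ_eq_zero ℤ L m Θ k (Or.inr (hσ ▸ h0))
    exact ⟨(quotKerEquivOfEqZero (hall n) (hall (n+1))).trans (pointChainsEquiv ℤ n)⟩

end
end
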